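/- Assume additionally n ≥ 2 (i.e., dimension 4n > 4). Define ε_{A'B'} by ε_{01} = 1 = −ε_{10}, ε_{00} = ε_{11} = 0; Λ_{AB} := (1/12) ∑_{C'∈{0,1}} [R^H(A,B;C',0,1;C') − R^H(B,A;C',0,1;C') − R^H(A,B;C',1,0;C') + R^H(B,A;C',1,0;C')]; Φ_{ABA'B'} := (1/4) ∑_{C'∈{0,1}} [R^H(A,B;C',A',B';C') + R^H(B,A;C',A',B';C') + R^H(A,B;C',B',A';C') + R^H(B,A;C',B',A';C')]; and Ψ_{ABC}{}^D := (1/2)(R^E(0,1;A,B,C;D) − R^E(1,0;A,B,C;D)) − δ_A{}^D Λ_{BC} − δ_B{}^D Λ_{AC}. Then for all indices: (a) (1/2)(R^E(A',B';A,B,C;D) − R^E(B',A';A,B,C;D)) = ε_{A'B'} (Ψ_{ABC}{}^D + δ_A{}^D Λ_{BC} + δ_B{}^D Λ_{AC}); (b) (1/2)(R^E(A',B';A,B,C;D) + R^E(B',A';A,B,C;D)) = δ_A{}^D Φ_{BCA'B'} − δ_B{}^D Φ_{ACA'B'}; (c) (1/2)(R^H(A,B;A',B',C';D') + R^H(B,A;A',B',C';D'))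 = δ_{A'}{}^{D'} Φ_{ABB'C'} − δ_{B'}{}^{D'} Φ_{ABA'C'}; (d) (1/2)(R^H(A,B;A',B',C';D') − R^H(B,A;A',B',C';D')) = Λ_{AB} (δ_{A'}{}^{D'} ε_{B'C'} + δ_{B'}{}^{D'} ε_{A'C'}); (e) Λ_{AB} = −Λ_{BA}; Φ_{ABA'B'} is symmetric in (A,B) and in (A',B'); Ψ_{ABC}{}^D is totally symmetric in (A,B,C); and ∑_{D} Ψ_{DBC}{}^{D} = 0. -/

import Mathlib

noncomputable section

/-- Kronecker delta with values in `ℂ`. -/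
def kdel {m : ℕ} (a b : Fin m) : ℂ := if a = b then 1 else 0

/-- The lowered epsilon symbol: `ε_{01} = 1`, `ε_{10} = −1`. -/
def epsLow (a b : Fin 2) : ℂ :=
  if a.val = 0 ∧ b.val = 1 then 1 else if a.val = 1 ∧ b.val = 0 then -1 else 0

/-- `Λ_{AB} = (1/3) R_{[AB]C'[A'B']}{}^{C'} / ε_{A'B'}`, written out explicitly. -/
def Lam (n : ℕ) (RH : Fin (2 * n) → Fin (2 * n) → Fin 2 → Fin 2 → Fin 2 → Fin 2 → ℂ)
    (A B : Fin (2 * n)) : ℂ :=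
  (1 / 12 : ℂ) * ∑ C' : Fin 2,
    (RH A B C' 0 1 C' - RH B A C' 0 1 C' - RH A B C' 1 0 C' + RH B A C' 1 0 C')

/-- `Φ_{ABA'B'} = R_{(AB)C'(A'B')}{}^{C'}`, written out explicitly. -/
def Phi (n : ℕ) (RH : Fin (2 * n) → Fin (2 * n) → Fin 2 → Fin 2 → Fin 2 → Fin 2 → ℂ)
    (A B : Fin (2 * n)) (A' B' : Fin 2) : ℂ :=
  (1 / 4 : ℂ) * ∑ C' : Fin 2,
    (RH A B C' A' B' C' + RH B A C' A' B' C' + RH A B C' B' A' C' + RH B A C' B' A' C')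

/-- `Ψ_{ABC}{}^D`, defined by the first curvature decomposition identity. -/
def Psi (n : ℕ)
    (RE : Fin 2 → Fin 2 → Fin (2 * n) → Fin (2 * n) → Fin (2 * n) → Fin (2 * n) → ℂ)
    (RH : Fin (2 * n) → Fin (2 * n) → Fin 2 → Fin 2 → Fin 2 → Fin 2 → ℂ)
    (A B C D : Fin (2 * n)) : ℂ :=
  (1 / 2 : ℂ) * (RE 0 1 A B C D - RE 1 0 A B C D) -
    kdel A D * Lam n RH B C - kdel B D * Lam n RH A C

/-!
Contracting the first Bianchi identity over the unprimed pair `C = D` gives, for fixed `A B`,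
`2n R^H - σ R^H = (δ-terms)`, where `σ` adds the transpositions `(13)` and `(23)` of the three
lower primed indices. As `σ⁴ - 5σ² + 4 = 0` and `2n ∉ {±1, ±2}`, this forces the part of `R^H`
antisymmetric in `A B` to be the `Λ`-term. The part symmetric in `A B` is antisymmetric in
`A' B'` and trace-free, which in dimension two already makes it the `Φ`-term. Contracting the
Bianchi identity over the primed pair `C' = D'` then expresses
`2 R^E_{ABC} + R^E_{BCA} + R^E_{CAB}` through `Φ` and `Λ`; this determines the part of `R^E`
symmetric in `A' B'`, and shows that `Ψ` is invariant under cyclic permutations of `A B C`.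
-/

section Rotations

variable {α : Type*}

theorem eq_of_two_mul_add_rotations_eq {f g : α → α → α → ℂ}
    (h : ∀ a b c, 2 * f a b c + f b c a + f c a b = g a b c)
    (hg : ∀ a b c, g a b c + g b c a + g c a b = 0) (a b c : α) : f a b c = g a b c := by
  linear_combination (3 / 4 : ℂ) * h a b c - (1 / 4 : ℂ) * h b c a - (1 / 4 : ℂ) * h c a b
    - (1 / 4 : ℂ) * hg a b c

theorem swap_right_of_swap_left_of_two_mul_eq {f : α → α → α → ℂ}
    (hswap : ∀ a b c, f a b c = f b a c) (h : ∀ a b c, 2 * f a b c = f b c a + f c a b)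
    (a b c : α) : f a b c = f a c b := by
  linear_combination (1 / 3 : ℂ) * (h a b c - h c a b) + hswap c a b

end Rotations

section TranspSum

variable {ι : Type*}

def transpSum (T : ι → ι → ι → ℂ) (p q r : ι) : ℂ := T r q p + T p r q

/-- In the group algebra of `S₃`, `(13) + (23)` acts by `±2` on the trivial and sign
representations and has eigenvalues `±1` on the standard one. -/
theorem transpSum_quartic (T : ι → ι → ι → ℂ) (p q r : ι) :
    transpSum (transpSum (transpSum (transpSum T))) p q r
      - 5 * transpSum (transpSum T) p q r + 4 * T p q r = 0 := by
  simp only [transpSum]; ring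

theorem transpSum_const_mul (c : ℂ) (T : ι → ι → ι → ℂ) :
    transpSum (fun p q r => c * T p q r) = fun p q r => c * transpSum T p q r := by
  funext p q r; simp only [transpSum]; ring

theorem eq_zero_of_transpSum_eq_mul {m : ℂ} (hm : (m ^ 2 - 1) * (m ^ 2 - 4) ≠ 0)
    {T : ι → ι → ι → ℂ} (hT : ∀ p q r, transpSum T p q r = m * T p q r) (p q r : ι) :
    T p q r = 0 := by
  have hT' : transpSum T = fun p q r => m * T p q r :=
    funext fun p => funext fun q => funext (hT p q)
  have h := transpSum_quartic T p q r
  simp only [hT', transpSum_const_mul] at h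
  have h' : (m ^ 2 - 1) * (m ^ 2 - 4) * T p q r = 0 := by linear_combination h
  exact (mul_eq_zero.mp h').resolve_left hm

end TranspSum

theorem sum_kdel_mul {m : ℕ} (a : Fin m) (f : Fin m → ℂ) : ∑ c, kdel a c * f c = f a := by
  simp [kdel]

theorem sum_mul_kdel {m : ℕ} (a : Fin m) (f : Fin m → ℂ) : ∑ c, f c * kdel a c = f a := by
  simp [kdel]

theorem sum_kdel_self (m : ℕ) : ∑ c : Fin m, kdel c c = m := by
  simp [kdel]

theorem epsLow_self (p : Fin 2) : epsLow p p = 0 := by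
  fin_cases p <;> simp [epsLow]

theorem epsLow_zero_one : epsLow 0 1 = 1 := by
  simp [epsLow]

theorem epsLow_one_zero : epsLow 1 0 = -1 := by
  simp [epsLow]

theorem epsLow_anticomm (p q : Fin 2) : epsLow p q = -epsLow q p := by
  fin_cases p <;> fin_cases q <;> simp [epsLow]

def lamTensor (p q r s : Fin 2) : ℂ := kdel p s * epsLow q r + kdel q s * epsLow p r

def symmTrace (X : Fin 2 → Fin 2 → Fin 2 → Fin 2 → ℂ) (q r : Fin 2) : ℂ :=
  (1 / 2) * ∑ t, (X t q r t + X t r q t)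

theorem transpSum_lamTensor (s : Fin 2) :
    transpSum (lamTensor · · · s) = fun p q r => -lamTensor p q r s := by
  funext p q r
  fin_cases p <;> fin_cases q <;> fin_cases r <;> fin_cases s <;>
    simp [transpSum, lamTensor, kdel, epsLow]

theorem eq_epsLow_mul_of_antisymm {τ : Fin 2 → Fin 2 → ℂ} (h : ∀ p q, τ p q = -τ q p)
    (p q : Fin 2) : τ p q = epsLow p q * τ 0 1 := by
  have hdiag : ∀ p, τ p p = 0 := fun p => CharZero.eq_neg_self_iff.mp (h p p)
  fin_cases p <;> fin_cases q <;> simp [epsLow, hdiag, h 1 0]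

/-- In dimension two, a tensor antisymmetric in `p q` is `ε_{pq}` times a trace-free
endomorphism, and lowering its index makes that endomorphism a symmetric form. -/
theorem eq_of_antisymm_of_traceless {X : Fin 2 → Fin 2 → Fin 2 → Fin 2 → ℂ}
    (hanti : ∀ p q r s, X p q r s = -X q p r s) (htr : ∀ p q, ∑ r, X p q r r = 0)
    (p q r s : Fin 2) :
    X p q r s = kdel p s * symmTrace X q r - kdel q s * symmTrace X p r := by
  have hdiag : ∀ p r s, X p p r s = 0 := fun p r s =>
    CharZero.eq_neg_self_iff.mp (hanti p p r s)
  have htr' : ∀ p q, X p q 1 1 = -X p q 0 0 := fun p q => by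
    have h := htr p q
    rw [Fin.sum_univ_two] at h
    linear_combination h
  fin_cases p <;> fin_cases q <;> fin_cases r <;> fin_cases s <;>
    simp only [Fin.zero_eta, Fin.mk_one, Fin.isValue, symmTrace, kdel, Fin.sum_univ_two, hdiag,
      hanti 1 0, htr', ↓reduceIte, zero_ne_one, one_ne_zero] <;> ring

/-- The contractions of the hypothesis `hY` determine `V` through the trace `τ`, which is
antisymmetric since `m ≠ -2`; then `Y - (τ₀₁ / 3) lamTensor` is an eigenvector of
`transpSum` with eigenvalue `m`. -/
theorem eq_mul_lamTensor_of_symm_of_traceless {m : ℂ} (hm : (m ^ 2 - 1) * (m ^ 2 - 4) ≠ 0)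
    {Y : Fin 2 → Fin 2 → Fin 2 → Fin 2 → ℂ} {V : Fin 2 → Fin 2 → ℂ}
    (hsymm : ∀ p q r s, Y p q r s = Y q p r s) (htr : ∀ p q, ∑ r, Y p q r r = 0)
    (hY : ∀ p q r s, m * Y p q r s - transpSum (Y · · · s) p q r =
      kdel p s * V q r + kdel q s * V p r)
    (p q r s : Fin 2) :
    Y p q r s = (1 / 6) * (∑ t, (Y t 0 1 t - Y t 1 0 t)) * lamTensor p q r s := by
  set τ : Fin 2 → Fin 2 → ℂ := fun p q => ∑ t, Y t p q t
  have hτ_swap : ∀ p q, ∑ t, Y p t q t = τ p q := fun p q =>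
    Finset.sum_congr rfl fun t _ => hsymm p t q t
  have hcontr_qs : ∀ p r, m * τ p r - τ r p = 3 * V p r := by
    intro p r
    have h := Finset.sum_congr rfl fun t (_ : t ∈ Finset.univ) => hY p t r t
    simp only [transpSum, Finset.sum_sub_distrib, Finset.sum_add_distrib, ← Finset.mul_sum,
      htr, sum_kdel_mul, ← Finset.sum_mul, sum_kdel_self, hτ_swap] at h
    linear_combination h
  have hcontr_rs : ∀ p q, V p q + V q p = -(τ p q + τ q p) := by
    intro p q
    have h := Finset.sum_congr rfl fun t (_ : t ∈ Finset.univ) => hY p q t t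
    simp only [transpSum, Finset.sum_sub_distrib, Finset.sum_add_distrib, ← Finset.mul_sum,
      htr, sum_kdel_mul, hτ_swap] at h
    linear_combination -h
  have hτ_anti : ∀ p q, τ p q = -τ q p := by
    intro p q
    have h : (m + 2) * (τ p q + τ q p) = 0 := by
      linear_combination hcontr_qs p q + hcontr_qs q p + 3 * hcontr_rs p q
    have hm2 : m + 2 ≠ 0 := fun h0 => hm (by linear_combination (m ^ 2 - 1) * (m - 2) * h0)
    linear_combination (mul_eq_zero.mp h).resolve_left hm2
  have hV : ∀ p q, V p q = (m + 1) / 3 * epsLow p q * τ 0 1 := by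
    intro p q
    linear_combination (-1 / 3 : ℂ) * hcontr_qs p q - (1 / 3 : ℂ) * hτ_anti q p
      + (m + 1) / 3 * eq_epsLow_mul_of_antisymm hτ_anti p q
  have hZ : ∀ p q r, Y p q r s - τ 0 1 / 3 * lamTensor p q r s = 0 := by
    refine eq_zero_of_transpSum_eq_mul hm fun p q r => ?_
    have hL := congrFun (congrFun (congrFun (transpSum_lamTensor s) p) q) r
    have hYpqr := hY p q r s
    simp only [transpSum, lamTensor] at hL hYpqr ⊢
    linear_combination -hYpqr - τ 0 1 / 3 * hL - kdel p s * hV q r - kdel q s * hV p r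
  have h01 : ∑ t, (Y t 0 1 t - Y t 1 0 t) = 2 * τ 0 1 := by
    rw [Finset.sum_sub_distrib]; linear_combination -hτ_anti 1 0
  rw [h01]; linear_combination hZ p q r

abbrev ETensor (n : ℕ) : Type :=
  Fin 2 → Fin 2 → Fin (2 * n) → Fin (2 * n) → Fin (2 * n) → Fin (2 * n) → ℂ

abbrev HTensor (n : ℕ) : Type :=
  Fin (2 * n) → Fin (2 * n) → Fin 2 → Fin 2 → Fin 2 → Fin 2 → ℂ

section Curvature

variable {n : ℕ}

def FirstBianchi (RE : ETensor n) (RH : HTensor n) : Prop :=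
  ∀ (A B C : Fin (2 * n)) (A' B' C' : Fin 2) (D : Fin (2 * n)) (D' : Fin 2),
    (RE A' B' A B C D * kdel C' D' + RH A B A' B' C' D' * kdel C D) +
    (RE B' C' B C A D * kdel A' D' + RH B C B' C' A' D' * kdel A D) +
    (RE C' A' C A B D * kdel B' D' + RH C A C' A' B' D' * kdel B D) = 0

structure IsQuaternionicCurvature (RE : ETensor n) (RH : HTensor n) : Prop where
  antisymm_E : ∀ A' B' A B C D, RE A' B' A B C D = -RE B' A' B A C D
  antisymm_H : ∀ A B A' B' C' D', RH A B A' B' C' D' = -RH B A B' A' C' D'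
  traceless_E : ∀ A' B' A B, ∑ C, RE A' B' A B C C = 0
  traceless_H : ∀ A B A' B', ∑ C', RH A B A' B' C' C' = 0
  bianchi : FirstBianchi RE RH

def ricciE (RE : ETensor n) (p q : Fin 2) (A B : Fin (2 * n)) : ℂ := ∑ C, RE p q A C B C

variable {RE : ETensor n} {RH : HTensor n}

theorem Phi_comm (A B : Fin (2 * n)) (p q : Fin 2) : Phi n RH A B p q = Phi n RH B A p q := by
  simp only [Phi, Fin.sum_univ_two]; ring

theorem Phi_comm_primed (A B : Fin (2 * n)) (p q : Fin 2) :
    Phi n RH A B p q = Phi n RH A B q p := by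
  simp only [Phi, Fin.sum_univ_two]; ring

theorem Lam_anticomm (A B : Fin (2 * n)) : Lam n RH A B = -Lam n RH B A := by
  simp only [Lam, Fin.sum_univ_two]; ring

theorem half_RE_sub_swap_eq (p q : Fin 2) (A B C D : Fin (2 * n)) :
    (1 / 2 : ℂ) * (RE p q A B C D - RE q p A B C D) =
      epsLow p q * (Psi n RE RH A B C D + kdel A D * Lam n RH B C + kdel B D * Lam n RH A C) := by
  fin_cases p <;> fin_cases q <;>
    simp only [Fin.zero_eta, Fin.mk_one, epsLow_self, epsLow_zero_one, epsLow_one_zero, Psi] <;>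
    ring

theorem FirstBianchi.trace_unprimed (hB : FirstBianchi RE RH)
    (hE : ∀ A' B' A B C D, RE A' B' A B C D = -RE B' A' B A C D)
    (hH : ∀ A B A' B' C' D', RH A B A' B' C' D' = -RH B A B' A' C' D')
    (htE : ∀ A' B' A B, ∑ C, RE A' B' A B C C = 0) (A B : Fin (2 * n)) (p q r s : Fin 2) :
    2 * n * RH A B p q r s - transpSum (RH A B · · · s) p q r =
      kdel q s * ricciE RE p r A B - kdel p s * ricciE RE q r B A := by
  have h := Finset.sum_congr rfl fun C (_ : C ∈ Finset.univ) => hB A B C p q r C s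
  simp only [Finset.sum_add_distrib, ← Finset.sum_mul, ← Finset.mul_sum, htE, sum_mul_kdel,
    sum_kdel_self, hE r p, Finset.sum_neg_distrib, Finset.sum_const_zero] at h
  simp only [transpSum, ricciE]
  push_cast at h
  linear_combination h - hH B A q r p s - hH B A r p q s

theorem FirstBianchi.trace_primed (hB : FirstBianchi RE RH)
    (hH : ∀ A B A' B' C' D', RH A B A' B' C' D' = -RH B A B' A' C' D')
    (htH : ∀ A B A' B', ∑ C', RH A B A' B' C' C' = 0) (A B C D : Fin (2 * n)) (p q : Fin 2) :
    2 * RE p q A B C D + RE q p B C A D + RE q p C A B D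
      + (∑ t, RH B C q t p t) * kdel A D - (∑ t, RH A C p t q t) * kdel B D = 0 := by
  have h := Finset.sum_congr rfl fun t (_ : t ∈ Finset.univ) => hB A B C p q t D t
  simp only [Finset.sum_add_distrib, ← Finset.sum_mul, ← Finset.mul_sum, htH, sum_mul_kdel,
    sum_kdel_self, hH C A, Finset.sum_neg_distrib, Finset.sum_const_zero] at h
  push_cast at h
  linear_combination h

theorem half_RH_add_swap_eq (hH : ∀ A B A' B' C' D', RH A B A' B' C' D' = -RH B A B' A' C' D')
    (htH : ∀ A B A' B', ∑ C', RH A B A' B' C' C' = 0) (A B : Fin (2 * n)) (p q r s : Fin 2) :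
    (1 / 2 : ℂ) * (RH A B p q r s + RH B A p q r s) =
      kdel p s * Phi n RH A B q r - kdel q s * Phi n RH A B p r := by
  let X : Fin 2 → Fin 2 → Fin 2 → Fin 2 → ℂ := fun p q r s =>
    (1 / 2 : ℂ) * (RH A B p q r s + RH B A p q r s)
  have hPhi : symmTrace X = Phi n RH A B := by
    funext q r; simp only [X, symmTrace, Phi, Fin.sum_univ_two]; ring
  rw [← hPhi]
  refine eq_of_antisymm_of_traceless (X := X) (fun p q r s => ?_) (fun p q => ?_) p q r s
  · linear_combination (1 / 2 : ℂ) * (hH A B p q r s + hH B A p q r s)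
  · simp only [X, ← Finset.mul_sum, Finset.sum_add_distrib, htH]; ring

theorem sq_sub_one_mul_sq_sub_four_ne_zero (hn : 2 ≤ n) :
    ((2 * n : ℂ) ^ 2 - 1) * ((2 * n : ℂ) ^ 2 - 4) ≠ 0 := by
  have hpos : (0 : ℤ) < ((2 * n : ℤ) ^ 2 - 1) * ((2 * n : ℤ) ^ 2 - 4) := by
    have : (4 : ℤ) ≤ 2 * n := by omega
    apply mul_pos <;> nlinarith
  exact_mod_cast hpos.ne'

theorem Psi_comm (hE : ∀ A' B' A B C D, RE A' B' A B C D = -RE B' A' B A C D)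
    (A B C D : Fin (2 * n)) : Psi n RE RH A B C D = Psi n RE RH B A C D := by
  simp only [Psi]
  linear_combination (1 / 2 : ℂ) * (hE 0 1 A B C D - hE 1 0 A B C D)

namespace IsQuaternionicCurvature

theorem half_RH_sub_swap_eq (hR : IsQuaternionicCurvature RE RH) (hn : 2 ≤ n)
    (A B : Fin (2 * n)) (p q r s : Fin 2) :
    (1 / 2 : ℂ) * (RH A B p q r s - RH B A p q r s) =
      Lam n RH A B * (kdel p s * epsLow q r + kdel q s * epsLow p r) := by
  let Y : Fin 2 → Fin 2 → Fin 2 → Fin 2 → ℂ := fun p q r s =>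
    (1 / 2 : ℂ) * (RH A B p q r s - RH B A p q r s)
  have hLam : (1 / 6) * (∑ t, (Y t 0 1 t - Y t 1 0 t)) = Lam n RH A B := by
    simp only [Y, Lam, Fin.sum_univ_two]; ring
  rw [← hLam]
  refine eq_mul_lamTensor_of_symm_of_traceless (Y := Y)
    (V := fun q r => (1 / 2 : ℂ) * (ricciE RE q r A B - ricciE RE q r B A))
    (sq_sub_one_mul_sq_sub_four_ne_zero hn) (fun p q r s => ?_) (fun p q => ?_)
    (fun p q r s => ?_) p q r s
  · linear_combination (1 / 2 : ℂ) * (hR.antisymm_H A B p q r s - hR.antisymm_H B A p q r s)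
  · simp only [Y, ← Finset.mul_sum, Finset.sum_sub_distrib, hR.traceless_H]; ring
  · have hAB := hR.bianchi.trace_unprimed hR.antisymm_E hR.antisymm_H hR.traceless_E A B p q r s
    have hBA := hR.bianchi.trace_unprimed hR.antisymm_E hR.antisymm_H hR.traceless_E B A p q r s
    simp only [transpSum] at hAB hBA ⊢
    linear_combination (1 / 2 : ℂ) * (hAB - hBA)

theorem RH_eq (hR : IsQuaternionicCurvature RE RH) (hn : 2 ≤ n)
    (A B : Fin (2 * n)) (p q r s : Fin 2) :
    RH A B p q r s = kdel p s * Phi n RH A B q r - kdel q s * Phi n RH A B p r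
      + Lam n RH A B * (kdel p s * epsLow q r + kdel q s * epsLow p r) := by
  linear_combination half_RH_add_swap_eq hR.antisymm_H hR.traceless_H A B p q r s
    + hR.half_RH_sub_swap_eq hn A B p q r s

theorem sum_RH_eq (hR : IsQuaternionicCurvature RE RH) (hn : 2 ≤ n)
    (A B : Fin (2 * n)) (p q : Fin 2) :
    ∑ t, RH A B p t q t = -Phi n RH A B p q + 3 * Lam n RH A B * epsLow p q := by
  simp only [hR.RH_eq hn A B, Finset.sum_add_distrib, Finset.sum_sub_distrib,
    mul_add, ← Finset.mul_sum, ← Finset.sum_mul, sum_kdel_mul, sum_kdel_self]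
  push_cast; ring

theorem two_mul_RE_add_rotations (hR : IsQuaternionicCurvature RE RH) (hn : 2 ≤ n)
    (A B C D : Fin (2 * n)) (p q : Fin 2) :
    2 * RE p q A B C D + RE q p B C A D + RE q p C A B D =
      kdel A D * (Phi n RH B C q p - 3 * Lam n RH B C * epsLow q p)
        - kdel B D * (Phi n RH A C p q - 3 * Lam n RH A C * epsLow p q) := by
  have h := hR.bianchi.trace_primed hR.antisymm_H hR.traceless_H A B C D p q
  rw [hR.sum_RH_eq hn, hR.sum_RH_eq hn] at h
  linear_combination h

theorem half_RE_add_swap_eq (hR : IsQuaternionicCurvature RE RH) (hn : 2 ≤ n)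
    (p q : Fin 2) (A B C D : Fin (2 * n)) :
    (1 / 2 : ℂ) * (RE p q A B C D + RE q p A B C D) =
      kdel A D * Phi n RH B C p q - kdel B D * Phi n RH A C p q := by
  refine eq_of_two_mul_add_rotations_eq
    (f := fun A B C => (1 / 2 : ℂ) * (RE p q A B C D + RE q p A B C D))
    (g := fun A B C => kdel A D * Phi n RH B C p q - kdel B D * Phi n RH A C p q)
    (fun A B C => ?_) (fun A B C => ?_) A B C
  · linear_combination (1 / 2 : ℂ) * (hR.two_mul_RE_add_rotations hn A B C D p q
      + hR.two_mul_RE_add_rotations hn A B C D q p)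
      + (1 / 2 : ℂ) * kdel A D * Phi_comm_primed (RH := RH) B C q p
      - (1 / 2 : ℂ) * kdel B D * Phi_comm_primed (RH := RH) A C q p
      - (3 / 2 : ℂ) * (kdel A D * Lam n RH B C - kdel B D * Lam n RH A C) * epsLow_anticomm q p
  · linear_combination kdel C D * Phi_comm (RH := RH) A B p q
      + kdel A D * Phi_comm (RH := RH) B C p q + kdel B D * Phi_comm (RH := RH) C A p q

theorem Psi_two_mul_eq (hR : IsQuaternionicCurvature RE RH) (hn : 2 ≤ n)
    (A B C D : Fin (2 * n)) :
    2 * Psi n RE RH A B C D = Psi n RE RH B C A D + Psi n RE RH C A B D := by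
  have h01 := hR.two_mul_RE_add_rotations hn A B C D 0 1
  have h10 := hR.two_mul_RE_add_rotations hn A B C D 1 0
  rw [epsLow_zero_one, epsLow_one_zero] at h01 h10
  simp only [Psi]
  linear_combination (1 / 2 : ℂ) * (h01 - h10)
    + (1 / 2 : ℂ) * (kdel A D * Phi_comm_primed B C 1 0 + kdel B D * Phi_comm_primed A C 1 0)
    + kdel A D * Lam_anticomm B C + kdel B D * Lam_anticomm A C + kdel C D * Lam_anticomm B A

theorem Psi_comm_right (hR : IsQuaternionicCurvature RE RH) (hn : 2 ≤ n)
    (A B C D : Fin (2 * n)) : Psi n RE RH A B C D = Psi n RE RH A C B D :=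
  swap_right_of_swap_left_of_two_mul_eq (f := (Psi n RE RH · · · D))
    (fun A B C => Psi_comm hR.antisymm_E A B C D) (fun A B C => hR.Psi_two_mul_eq hn A B C D)
    A B C

theorem sum_Psi_trace (hR : IsQuaternionicCurvature RE RH) (hn : 2 ≤ n) (B C : Fin (2 * n)) :
    ∑ D, Psi n RE RH D B C D = 0 := by
  have hperm : ∀ D, Psi n RE RH D B C D = Psi n RE RH B C D D := fun D =>
    (Psi_comm hR.antisymm_E D B C D).trans (hR.Psi_comm_right hn B D C D)
  rw [Finset.sum_congr rfl fun D _ => hperm D]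
  simp only [Psi, Finset.sum_sub_distrib, ← Finset.mul_sum, hR.traceless_E, sum_kdel_mul]
  linear_combination -Lam_anticomm (RH := RH) B C

end IsQuaternionicCurvature

end Curvature

/-- Proposition 2.2 (curvature decomposition on unimodular quaternionic manifolds of
dimension `> 4`): the curvature components decompose in terms of `Λ`, `Φ`, `Ψ`, with the
stated symmetries and trace-freeness. -/
theorem curvature_decomposition (n : ℕ) (hn : 2 ≤ n)
    (RE : Fin 2 → Fin 2 → Fin (2 * n) → Fin (2 * n) → Fin (2 * n) → Fin (2 * n) → ℂ)
    (RH : Fin (2 * n) → Fin (2 * n) → Fin 2 → Fin 2 → Fin 2 → Fin 2 → ℂ)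
    (hE : ∀ A' B' A B C D, RE A' B' A B C D = -RE B' A' B A C D)
    (hH : ∀ A B A' B' C' D', RH A B A' B' C' D' = -RH B A B' A' C' D')
    (htE : ∀ A' B' A B, ∑ C, RE A' B' A B C C = 0)
    (htH : ∀ A B A' B', ∑ C', RH A B A' B' C' C' = 0)
    (hBianchi : ∀ (A B C : Fin (2 * n)) (A' B' C' : Fin 2)
        (D : Fin (2 * n)) (D' : Fin 2),
      (RE A' B' A B C D * kdel C' D' + RH A B A' B' C' D' * kdel C D) +
      (RE B' C' B C A D * kdel A' D' + RH B C B' C' A' D' * kdel A D) +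
      (RE C' A' C A B D * kdel B' D' + RH C A C' A' B' D' * kdel B D) = 0) :
    (∀ (A' B' : Fin 2) (A B C D : Fin (2 * n)),
      (1 / 2 : ℂ) * (RE A' B' A B C D - RE B' A' A B C D) =
        epsLow A' B' * (Psi n RE RH A B C D +
          kdel A D * Lam n RH B C + kdel B D * Lam n RH A C)) ∧
    (∀ (A' B' : Fin 2) (A B C D : Fin (2 * n)),
      (1 / 2 : ℂ) * (RE A' B' A B C D + RE B' A' A B C D) =
        kdel A D * Phi n RH B C A' B' - kdel B D * Phi n RH A C A' B') ∧
    (∀ (A B : Fin (2 * n)) (A' B' C' D' : Fin 2),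
      (1 / 2 : ℂ) * (RH A B A' B' C' D' + RH B A A' B' C' D') =
        kdel A' D' * Phi n RH A B B' C' - kdel B' D' * Phi n RH A B A' C') ∧
    (∀ (A B : Fin (2 * n)) (A' B' C' D' : Fin 2),
      (1 / 2 : ℂ) * (RH A B A' B' C' D' - RH B A A' B' C' D') =
        Lam n RH A B * (kdel A' D' * epsLow B' C' + kdel B' D' * epsLow A' C')) ∧
    (∀ A B : Fin (2 * n), Lam n RH A B = -Lam n RH B A) ∧
    (∀ (A B : Fin (2 * n)) (A' B' : Fin 2),
      Phi n RH A B A' B' = Phi n RH B A A' B' ∧ Phi n RH A B A' B' = Phi n RH A B B' A') ∧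
    (∀ A B C D : Fin (2 * n),
      Psi n RE RH A B C D = Psi n RE RH B A C D ∧
      Psi n RE RH A B C D = Psi n RE RH A C B D) ∧
    (∀ B C : Fin (2 * n), ∑ D, Psi n RE RH D B C D = 0) := by
  have hR : IsQuaternionicCurvature RE RH := ⟨hE, hH, htE, htH, hBianchi⟩
  exact ⟨half_RE_sub_swap_eq, hR.half_RE_add_swap_eq hn, half_RH_add_swap_eq hH htH,
    hR.half_RH_sub_swap_eq hn, Lam_anticomm,
    fun A B p q => ⟨Phi_comm A B p q, Phi_comm_primed A B p q⟩,
    fun A B C D => ⟨Psi_comm hE A B C D, hR.Psi_comm_right hn A B C D⟩, hR.sum_Psi_trace hn⟩
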